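/- Let (X_n) be an exchangeable sequence of random elements in an arbitrary measurable space (S, 𝒮). If X_1 admits a regular conditional distribution given the exchangeable σ-algebra E_∞, then (X_n) is conditionally iid given E_∞; indeed the infinite product kernel κ^∞ of a regular conditional distribution κ of X_1 given E_∞ is a regular conditional distribution of the whole sequence (X_n) given E_∞. -/

import Mathlib

/-!
By exchangeability, the law `ν` of the whole sequence on `ℕ → S` is invariant under permutations
of finitely many coordinates. For a measurable `B`, the frequencies of visits to `B` in the blocks
`[4 ^ k, 2 * 4 ^ k)` have increments of `L¹(ν)` norm `O(2 ^ (-k))` (a second-moment computation that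
uses only exchangeability), so they converge `ν`-a.e.; their `limsup` `α_B` is invariant under
finitary permutations, hence `α_B ∘ X` is measurable for the exchangeable σ-algebra.
A transposition moving coordinate `m` into a far block fixes the first `m` coordinates and every
invariant function, so against such a weight the indicator of `{s m ∈ B}` can be replaced by its
block frequencies and then by `α_B`. Induction on `m` gives
`E[∏ i < m, 1_{A i}(X i); G] = E[∏ i < m, α_{A i}(X); G]` for exchangeable events `G`;
for `m = 1` this identifies `α_B ∘ X` with `E[1_B(X 0) | E_∞]`, i.e. with `κ(·, B)`, and then the
identity for general `m` is the product formula for `κ^∞`.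
-/

open MeasureTheory ProbabilityTheory Filter Finset Topology

/-- A sequence of random elements is exchangeable if every finite coordinate
permutation leaves the joint distribution unchanged. -/
def Exchangeable {Ω S : Type*} {mΩ : MeasurableSpace Ω} [MeasurableSpace S]
    (P : Measure Ω) (X : ℕ → Ω → S) : Prop :=
  ∀ (n : ℕ) (σ : Equiv.Perm (Fin n)),
    P.map (fun ω (i : Fin n) => X i ω) = P.map (fun ω (i : Fin n) => X (σ i) ω)

/-- The exchangeable σ-algebra of the sequence: preimages under the whole sequence of
measurable sets of `ℕ → S` invariant under all finite permutations of coordinates. -/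
def exchangeableSigma {Ω S : Type*} [MeasurableSpace S] (X : ℕ → Ω → S) :
    MeasurableSpace Ω :=
  MeasurableSpace.generateFrom
    {B | ∃ A : Set (ℕ → S), MeasurableSet A ∧
      (∀ π : Equiv.Perm ℕ, (∃ N, ∀ m ≥ N, π m = m) →
        (fun s : ℕ → S => fun i => s (π i)) ⁻¹' A = A) ∧
      B = (fun ω i => X i ω) ⁻¹' A}

/-- The tail σ-algebra of the sequence. -/
def tailSigma {Ω S : Type*} [MeasurableSpace S] (X : ℕ → Ω → S) :
    MeasurableSpace Ω :=
  ⨅ n : ℕ, MeasurableSpace.comap (fun ω (k : ℕ) => X (n + k) ω) inferInstance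

/-- The left-shift invariant σ-algebra of the sequence. -/
def shiftInvariantSigma {Ω S : Type*} [MeasurableSpace S] (X : ℕ → Ω → S) :
    MeasurableSpace Ω :=
  MeasurableSpace.generateFrom
    {B | ∃ A : Set (ℕ → S), MeasurableSet A ∧
      (fun s : ℕ → S => fun i => s (i + 1)) ⁻¹' A = A ∧
      B = (fun ω i => X i ω) ⁻¹' A}

/-- `κ` is a regular conditional distribution of `X` given the sub-σ-algebra `𝒢`. -/
def IsRCD {Ω S : Type*} [MeasurableSpace S] {mΩ : MeasurableSpace Ω}
    (P : Measure Ω) (X : Ω → S) (𝒢 : MeasurableSpace Ω)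
    (κ : @Kernel Ω S 𝒢 _) : Prop :=
  ∀ B : Set S, MeasurableSet B →
    (fun ω => (κ ω B).toReal) =ᵐ[P]
      MeasureTheory.condExp 𝒢 P (fun ω => B.indicator (fun _ => (1 : ℝ)) (X ω))

/-- The sequence `X` is conditionally iid given `𝒢`, with kernel `κ`: the conditional
distribution of the sequence given `𝒢` is the infinite product kernel `κ^∞`, expressed
via its finite-dimensional distributions. -/
def CondIIDKernel {Ω S : Type*} [MeasurableSpace S] {mΩ : MeasurableSpace Ω}
    (P : Measure Ω) (X : ℕ → Ω → S) (𝒢 : MeasurableSpace Ω)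
    (κ : @Kernel Ω S 𝒢 _) : Prop :=
  ∀ (m : ℕ) (A : Fin m → Set S), (∀ i, MeasurableSet (A i)) →
    ∀ G : Set Ω, MeasurableSet[𝒢] G →
      P (G ∩ ⋂ i, {ω | X i ω ∈ A i}) = ∫⁻ ω in G, ∏ i, κ ω (A i) ∂P

/-- The sequence `X` is conditionally iid given `𝒢`. -/
def CondIID {Ω S : Type*} [MeasurableSpace S] {mΩ : MeasurableSpace Ω}
    (P : Measure Ω) (X : ℕ → Ω → S) (𝒢 : MeasurableSpace Ω) : Prop :=
  ∃ κ : @Kernel Ω S 𝒢 _, @IsMarkovKernel Ω S 𝒢 _ κ ∧ CondIIDKernel P X 𝒢 κ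

/-- `empAvg X B ω n` is the empirical measure `μ_{ω,n}(B)` of the set `B`. -/
noncomputable def empAvg {Ω S : Type*} (X : ℕ → Ω → S) (B : Set S) (ω : Ω) (n : ℕ) : ℝ :=
  (∑ i ∈ Finset.range n, B.indicator (fun _ => (1 : ℝ)) (X i ω)) / n

/-- A Borel measure is tight if compacts have measure arbitrarily close to full. -/
def IsTightMeasure {S : Type*} [TopologicalSpace S] [MeasurableSpace S]
    (μ : Measure S) : Prop :=
  ∀ ε : ℝ, 0 < ε → ∃ K : Set S, IsCompact K ∧ 1 - ENNReal.ofReal ε < μ K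

/-- `μ` is outer regular on compact sets. -/
def OuterRegularOnCompacts {S : Type*} [TopologicalSpace S] [MeasurableSpace S]
    (μ : Measure S) : Prop :=
  ∀ K : Set S, IsCompact K → μ K = ⨅ O ∈ {O : Set S | IsOpen O ∧ K ⊆ O}, μ O

/-- `μ` is a Radon measure: inner regular with respect to compact sets on Borel sets. -/
def IsRadon {S : Type*} [TopologicalSpace S] [MeasurableSpace S]
    (μ : Measure S) : Prop :=
  ∀ B : Set S, MeasurableSet B → μ B = ⨆ K ∈ {K : Set S | IsCompact K ∧ K ⊆ B}, μ K

open scoped ENNReal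

section Moments

variable {α ι : Type*} {mα : MeasurableSpace α} {μ : Measure α}

lemma sq_integral_abs_le_integral_sq [IsProbabilityMeasure μ] {f : α → ℝ} (hf : MemLp f 2 μ) :
    (∫ x, |f x| ∂μ) ^ 2 ≤ ∫ x, f x ^ 2 ∂μ := by
  have h := variance_nonneg |f| μ
  rw [variance_eq_sub hf.abs] at h
  simpa [sq_abs] using h

lemma ae_tendsto_limsup_of_summable_integral_abs_sub {f : ℕ → α → ℝ}
    (hf : ∀ k, Integrable (f k) μ)
    (hsum : Summable fun k => ∫ x, |f (k + 1) x - f k x| ∂μ) :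
    ∀ᵐ x ∂μ, Tendsto (fun k => f k x) atTop (𝓝 (limsup (fun k => f k x) atTop)) := by
  have hD : ∀ k, Integrable (fun x => f (k + 1) x - f k x) μ := fun k => (hf (k + 1)).sub (hf k)
  have hfinite : ∀ᵐ x ∂μ, ∑' k, ‖f (k + 1) x - f k x‖ₑ < ∞ := by
    refine ae_lt_top' (AEMeasurable.tsum fun k => (hD k).aestronglyMeasurable.enorm) ?_
    rw [lintegral_tsum fun k => (hD k).aestronglyMeasurable.enorm]
    simp_rw [← ofReal_integral_norm_eq_lintegral_enorm (hD _), Real.norm_eq_abs]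
    rw [← ENNReal.ofReal_tsum_of_nonneg (fun k => integral_nonneg fun _ => abs_nonneg _) hsum]
    exact ENNReal.ofReal_ne_top
  filter_upwards [hfinite] with x hx
  have hcauchy : CauchySeq fun k => f k x := by
    refine cauchySeq_of_summable_dist ?_
    simpa [dist_eq_norm', ← ofReal_norm] using ENNReal.summable_toReal hx.ne
  obtain ⟨l, hl⟩ := cauchySeq_tendsto_of_complete hcauchy
  rwa [hl.limsup_eq]

lemma Set.indicator_one_mem_unitInterval (A : Set α) (x : α) :
    A.indicator (fun _ => (1 : ℝ)) x ∈ unitInterval := by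
  by_cases hx : x ∈ A <;> simp [hx]

lemma abs_mul_le_of_mem_unitInterval {x y C : ℝ} (hx : x ∈ unitInterval) (hy : |y| ≤ C) :
    |x * y| ≤ C := by
  rw [abs_mul, abs_of_nonneg hx.1]
  exact (mul_le_of_le_one_left (abs_nonneg y) hx.2).trans hy

lemma integrable_of_forall_mem_unitInterval [IsFiniteMeasure μ] {f : α → ℝ} (hf : Measurable f)
    (h : ∀ x, f x ∈ unitInterval) : Integrable f μ :=
  .of_bound hf.aestronglyMeasurable 1 (.of_forall fun x => by
    rw [Real.norm_eq_abs, abs_le]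
    exact ⟨by linarith [(h x).1], (h x).2⟩)

variable [DecidableEq ι] {Y : ι → α → ℝ} {a b : ℝ}

lemma integral_sum_mul_sum_of_moments (hY : ∀ i j, Integrable (fun x => Y i x * Y j x) μ)
    (hdiag : ∀ i, ∫ x, Y i x * Y i x ∂μ = b) (hoff : ∀ i j, i ≠ j → ∫ x, Y i x * Y j x ∂μ = a)
    (I J : Finset ι) :
    ∫ x, (∑ i ∈ I, Y i x) * (∑ j ∈ J, Y j x) ∂μ = #I * #J * a + #(I ∩ J) * (b - a) := by
  have hmoment : ∀ i j, ∫ x, Y i x * Y j x ∂μ = a + if i = j then b - a else 0 := fun i j => by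
    split_ifs with h
    · subst h; rw [hdiag]; ring
    · rw [hoff i j h, add_zero]
  simp_rw [Finset.sum_mul_sum]
  rw [integral_finsetSum _ fun i _ => integrable_finsetSum _ fun j _ => hY i j]
  simp_rw [integral_finsetSum _ fun j _ => hY _ j, hmoment, Finset.sum_add_distrib,
    Finset.sum_ite_eq, Finset.sum_const, nsmul_eq_mul, ← Finset.sum_filter, Finset.sum_const,
    nsmul_eq_mul]
  rw [Finset.filter_mem_eq_inter]
  ring

lemma integral_sq_avg_sub_avg_of_moments (hY : ∀ i j, Integrable (fun x => Y i x * Y j x) μ)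
    (hdiag : ∀ i, ∫ x, Y i x * Y i x ∂μ = b) (hoff : ∀ i j, i ≠ j → ∫ x, Y i x * Y j x ∂μ = a)
    {I J : Finset ι} (hI : I.Nonempty) (hJ : J.Nonempty) (hIJ : Disjoint I J) :
    ∫ x, ((∑ i ∈ I, Y i x) / #I - (∑ j ∈ J, Y j x) / #J) ^ 2 ∂μ
      = (b - a) * (1 / #I + 1 / #J) := by
  have hint : ∀ I J : Finset ι,
      Integrable (fun x => (∑ i ∈ I, Y i x) * (∑ j ∈ J, Y j x)) μ := fun I J => by
    simp_rw [Finset.sum_mul_sum]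
    exact integrable_finsetSum _ fun i _ => integrable_finsetSum _ fun j _ => hY i j
  have hmoment := integral_sum_mul_sum_of_moments hY hdiag hoff
  have hexpand : ∀ x, ((∑ i ∈ I, Y i x) / #I - (∑ j ∈ J, Y j x) / #J) ^ 2
      = 1 / (#I : ℝ) ^ 2 * ((∑ i ∈ I, Y i x) * (∑ i ∈ I, Y i x))
        - 2 / ((#I : ℝ) * #J) * ((∑ i ∈ I, Y i x) * (∑ j ∈ J, Y j x))
        + 1 / (#J : ℝ) ^ 2 * ((∑ j ∈ J, Y j x) * (∑ j ∈ J, Y j x)) := fun x => by ring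
  have hp : (#I : ℝ) ≠ 0 := by simp [hI.ne_empty]
  have hq : (#J : ℝ) ≠ 0 := by simp [hJ.ne_empty]
  simp_rw [hexpand]
  have hII := (hint I I).const_mul (1 / (#I : ℝ) ^ 2)
  have hIJ' := (hint I J).const_mul (2 / ((#I : ℝ) * #J))
  have hsub : Integrable (fun x => 1 / (#I : ℝ) ^ 2 * ((∑ i ∈ I, Y i x) * (∑ i ∈ I, Y i x))
      - 2 / ((#I : ℝ) * #J) * ((∑ i ∈ I, Y i x) * (∑ j ∈ J, Y j x))) μ := hII.sub hIJ'
  rw [integral_add hsub ((hint J J).const_mul _), integral_sub hII hIJ', integral_const_mul,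
    integral_const_mul, integral_const_mul, hmoment, hmoment, hmoment, Finset.inter_self,
    Finset.inter_self, Finset.disjoint_iff_inter_eq_empty.1 hIJ, Finset.card_empty]
  field_simp
  ring

end Moments

lemma setLIntegral_prod_kernel_eq_ofReal {Ω S : Type*} {mΩ : MeasurableSpace Ω} [MeasurableSpace S]
    {P : Measure Ω} [IsFiniteMeasure P] {𝒢 : MeasurableSpace Ω} (h𝒢 : 𝒢 ≤ mΩ)
    (κ : @Kernel Ω S 𝒢 _) [@IsMarkovKernel Ω S 𝒢 _ κ] {m : ℕ} {A : Fin m → Set S}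
    (hA : ∀ i, MeasurableSet (A i)) (G : Set Ω) :
    ∫⁻ ω in G, ∏ i, κ ω (A i) ∂P = ENNReal.ofReal (∫ ω in G, ∏ i, (κ ω (A i)).toReal ∂P) := by
  have hmeas : Measurable[mΩ] fun ω => ∏ i, (κ ω (A i)).toReal :=
    Finset.measurable_prod _ fun i _ => ((κ.measurable_coe (hA i)).mono h𝒢 le_rfl).ennreal_toReal
  rw [ofReal_integral_eq_lintegral_ofReal
    (integrable_of_forall_mem_unitInterval hmeas fun ω => unitInterval.prod_mem fun i _ =>
      ⟨ENNReal.toReal_nonneg, measureReal_le_one⟩).integrableOn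
    (.of_forall fun ω => Finset.prod_nonneg fun i _ => ENNReal.toReal_nonneg)]
  refine lintegral_congr fun ω => ?_
  rw [ENNReal.ofReal_prod_of_nonneg fun i _ => ENNReal.toReal_nonneg]
  exact Finset.prod_congr rfl fun i _ => (ENNReal.ofReal_toReal (measure_ne_top _ _)).symm

def IsFinitaryPerm (π : Equiv.Perm ℕ) : Prop := ∃ N, ∀ m ≥ N, π m = m

lemma isFinitaryPerm_swap (a b : ℕ) : IsFinitaryPerm (Equiv.swap a b) :=
  ⟨max a b + 1, fun _ _ => Equiv.swap_apply_of_ne_of_ne (by omega) (by omega)⟩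

lemma Equiv.Perm.exists_fin_perm_val_eq {π : Equiv.Perm ℕ} {N n : ℕ} (hπ : ∀ m ≥ N, π m = m)
    (hn : N ≤ n) : ∃ σ : Equiv.Perm (Fin n), ∀ i, (σ i : ℕ) = π i := by
  have hlt : ∀ x, π x < n ↔ x < n := fun x => by
    refine ⟨fun h => ?_, fun h => ?_⟩
    · by_contra! hx
      rw [hπ x (hn.trans hx)] at h
      omega
    · by_contra! hx
      have := hπ (π x) (hn.trans hx)
      rw [π.injective this] at hx
      omega
  exact ⟨Fin.equivSubtype.symm.permCongr (π.subtypePerm hlt), fun i => rfl⟩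

section PathSpace

variable {S : Type*} [MeasurableSpace S]

variable (S) in
def permInvariantSigma : MeasurableSpace (ℕ → S) :=
  ⨅ (π : Equiv.Perm ℕ) (_ : IsFinitaryPerm π), MeasurableSpace.invariants (· ∘ π)

lemma measurableSet_permInvariantSigma_iff {A : Set (ℕ → S)} :
    MeasurableSet[permInvariantSigma S] A ↔
      MeasurableSet A ∧ ∀ π, IsFinitaryPerm π → (· ∘ π) ⁻¹' A = A := by
  rw [permInvariantSigma, MeasurableSpace.measurableSet_iInf]
  simp only [MeasurableSpace.measurableSet_iInf, MeasurableSpace.measurableSet_invariants]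
  exact ⟨fun h => ⟨(h 1 ⟨0, fun _ _ => rfl⟩).1, fun π hπ => (h π hπ).2⟩,
    fun h π hπ => ⟨h.1, h.2 π hπ⟩⟩

lemma permInvariantSigma_le : permInvariantSigma S ≤ MeasurableSpace.pi :=
  fun _ hA => (measurableSet_permInvariantSigma_iff.1 hA).1

lemma measurable_permInvariantSigma {β : Type*} [MeasurableSpace β] {h : (ℕ → S) → β}
    (hh : Measurable h) (hinv : ∀ π, IsFinitaryPerm π → ∀ s, h (s ∘ π) = h s) :
    Measurable[permInvariantSigma S] h := fun _ ht =>
  measurableSet_permInvariantSigma_iff.2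
    ⟨hh ht, fun π hπ => Set.ext fun s => by simp only [Set.mem_preimage, hinv π hπ]⟩

lemma exchangeableSigma_eq_comap {Ω : Type*} (X : ℕ → Ω → S) :
    exchangeableSigma X = (permInvariantSigma S).comap fun ω i => X i ω := by
  rw [exchangeableSigma, ← @MeasurableSpace.generateFrom_measurableSet _ (.comap _ _)]
  congr 1
  ext B
  simp only [Set.mem_ofPred_eq, MeasurableSpace.measurableSet_comap,
    measurableSet_permInvariantSigma_iff]
  exact ⟨fun ⟨A, hA, hinv, hB⟩ => ⟨A, ⟨hA, hinv⟩, hB.symm⟩,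
    fun ⟨A, ⟨hA, hinv⟩, hB⟩ => ⟨A, hA, hinv, hB.symm⟩⟩

end PathSpace

section Law

variable {Ω S : Type*} {mΩ : MeasurableSpace Ω} [MeasurableSpace S]

lemma Exchangeable.map_comp_perm {P : Measure Ω} [IsFiniteMeasure P] {X : ℕ → Ω → S}
    (hX : ∀ n, Measurable (X n)) (hexch : Exchangeable P X) {π : Equiv.Perm ℕ}
    (hπ : IsFinitaryPerm π) :
    (P.map fun ω i => X i ω).map (· ∘ π) = P.map fun ω i => X i ω := by
  have hΦ : Measurable fun ω i => X i ω := measurable_pi_lambda _ hX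
  have hπm : Measurable fun s : ℕ → S => s ∘ π :=
    measurable_pi_lambda _ fun _ => measurable_pi_apply _
  rw [Measure.map_map hπm hΦ]
  refine IsProjectiveLimit.unique (P := fun I => (P.map fun ω i => X i ω).map I.restrict)
    (fun I => ?_) (fun _ => rfl)
  obtain ⟨N, hN⟩ := hπ
  set n := max N (I.sup id + 1)
  have hI : ∀ i ∈ I, i < n := fun i hi => by
    have := Finset.le_sup (f := id) hi
    simp only [id] at this
    omega
  obtain ⟨σ, hσ⟩ := Equiv.Perm.exists_fin_perm_val_eq hN (le_max_left N (I.sup id + 1))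
  set g : (Fin n → S) → (I → S) := fun v i => v ⟨i, hI i i.2⟩
  have hg : Measurable g := measurable_pi_lambda _ fun _ => measurable_pi_apply _
  have h1 : I.restrict ∘ (fun s => s ∘ π) ∘ (fun ω i => X i ω)
      = g ∘ fun ω (i : Fin n) => X (σ i) ω := by
    ext ω i
    simp [g, hσ]
  have h2 : I.restrict ∘ (fun ω i => X i ω) = g ∘ fun ω (i : Fin n) => X i ω := rfl
  dsimp only
  rw [Measure.map_map (Finset.measurable_restrict I) (hπm.comp hΦ),
    Measure.map_map (Finset.measurable_restrict I) hΦ, h1, h2,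
    ← Measure.map_map hg (measurable_pi_lambda _ fun _ => hX _),
    ← Measure.map_map hg (measurable_pi_lambda _ fun _ => hX _), hexch n σ]

end Law

section Frequencies

variable {S : Type*}

noncomputable def blockFreq (A : Set S) (n : ℕ) (s : ℕ → S) : ℝ :=
  (∑ j ∈ Finset.Ico n (2 * n), A.indicator (fun _ => (1 : ℝ)) (s j)) / n

noncomputable def limFreq (A : Set S) (s : ℕ → S) : ℝ :=
  limsup (fun k => blockFreq A (4 ^ k) s) atTop

lemma blockFreq_mem_unitInterval (A : Set S) (n : ℕ) (s : ℕ → S) :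
    blockFreq A n s ∈ unitInterval := by
  rcases Nat.eq_zero_or_pos n with rfl | hn
  · simp [blockFreq]
  have hsum := Finset.sum_le_card_nsmul (Finset.Ico n (2 * n)) _ 1
    fun j _ => (Set.indicator_one_mem_unitInterval A (s j)).2
  rw [Nat.card_Ico, show 2 * n - n = n by omega, nsmul_one] at hsum
  refine ⟨div_nonneg (Finset.sum_nonneg fun j _ => (Set.indicator_one_mem_unitInterval A (s j)).1)
    n.cast_nonneg, (div_le_one (by exact_mod_cast hn)).2 hsum⟩

lemma blockFreq_comp_perm (A : Set S) {π : Equiv.Perm ℕ} {N n : ℕ} (hπ : ∀ m ≥ N, π m = m)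
    (hn : N ≤ n) (s : ℕ → S) : blockFreq A n (s ∘ π) = blockFreq A n s := by
  unfold blockFreq
  congr 1
  refine Finset.sum_congr rfl fun j hj => ?_
  rw [Function.comp_apply, hπ j (hn.trans (Finset.mem_Ico.1 hj).1)]

lemma limFreq_comp_perm (A : Set S) {π : Equiv.Perm ℕ} (hπ : IsFinitaryPerm π) (s : ℕ → S) :
    limFreq A (s ∘ π) = limFreq A s := by
  obtain ⟨N, hN⟩ := hπ
  refine limsup_congr ?_
  filter_upwards [eventually_ge_atTop N] with k hk
  exact blockFreq_comp_perm A hN (hk.trans (Nat.lt_pow_self (by norm_num)).le) s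

lemma limFreq_mem_unitInterval (A : Set S) (s : ℕ → S) : limFreq A s ∈ unitInterval := by
  have hbdd : IsBoundedUnder (· ≤ ·) atTop fun k => blockFreq A (4 ^ k) s :=
    isBoundedUnder_of ⟨1, fun _ => (blockFreq_mem_unitInterval A _ s).2⟩
  have hcobdd : IsCoboundedUnder (· ≤ ·) atTop fun k => blockFreq A (4 ^ k) s :=
    isCoboundedUnder_le_of_le atTop fun _ => (blockFreq_mem_unitInterval A _ s).1
  exact ⟨le_limsup_of_frequently_le (.of_forall fun _ => (blockFreq_mem_unitInterval A _ s).1) hbdd,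
    limsup_le_of_le hcobdd (.of_forall fun _ => (blockFreq_mem_unitInterval A _ s).2)⟩

variable [MeasurableSpace S]

lemma measurable_blockFreq {A : Set S} (hA : MeasurableSet A) (n : ℕ) :
    Measurable (blockFreq A n) :=
  (Finset.measurable_sum _ fun j _ =>
    (measurable_const.indicator hA).comp (measurable_pi_apply j)).div_const _

lemma measurable_limFreq {A : Set S} (hA : MeasurableSet A) : Measurable (limFreq A) :=
  Measurable.limsup fun _ => measurable_blockFreq hA _

end Frequencies

section InvariantMeasure

variable {S : Type*} [MeasurableSpace S] {ν : Measure (ℕ → S)}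
  (hν : ∀ π, IsFinitaryPerm π → ν.map (· ∘ π) = ν)
include hν

lemma integral_comp_perm {π : Equiv.Perm ℕ} (hπ : IsFinitaryPerm π) {f : (ℕ → S) → ℝ}
    (hf : Measurable f) : ∫ s, f (s ∘ π) ∂ν = ∫ s, f s ∂ν := by
  conv_rhs => rw [← hν π hπ]
  exact (integral_map (measurable_pi_lambda _ fun _ => measurable_pi_apply _).aemeasurable
    hf.aestronglyMeasurable).symm

lemma integral_indicator_apply_eq {A : Set S} (hA : MeasurableSet A) (i : ℕ) :
    ∫ s, A.indicator (fun _ => (1 : ℝ)) (s i) ∂ν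
      = ∫ s, A.indicator (fun _ => (1 : ℝ)) (s 0) ∂ν := by
  rw [← integral_comp_perm hν (isFinitaryPerm_swap 0 i) (f := fun s => A.indicator _ (s 0))
    ((measurable_const.indicator hA).comp (measurable_pi_apply 0))]
  simp only [Function.comp_apply, Equiv.swap_apply_left]

lemma integral_indicator_mul_indicator_apply_eq {A : Set S} (hA : MeasurableSet A) {i j : ℕ}
    (hij : i ≠ j) :
    ∫ s, A.indicator (fun _ => (1 : ℝ)) (s i) * A.indicator (fun _ => (1 : ℝ)) (s j) ∂ν
      = ∫ s, A.indicator (fun _ => (1 : ℝ)) (s 0) * A.indicator (fun _ => (1 : ℝ)) (s 1) ∂ν := by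
  set Y : ℕ → (ℕ → S) → ℝ := fun k s => A.indicator (fun _ => (1 : ℝ)) (s k)
  have hY : ∀ k, Measurable (Y k) :=
    fun k => (measurable_const.indicator hA).comp (measurable_pi_apply k)
  set j' := Equiv.swap 0 i j
  have hj' : j' ≠ 0 := by
    simp only [j', Ne, Equiv.swap_apply_eq_iff, Equiv.swap_apply_left]
    exact hij.symm
  calc ∫ s, Y i s * Y j s ∂ν = ∫ s, Y 0 (s ∘ Equiv.swap 0 i) * Y j' (s ∘ Equiv.swap 0 i) ∂ν := by
        simp [Y, j']
    _ = ∫ s, Y 0 s * Y j' s ∂ν := integral_comp_perm hν (isFinitaryPerm_swap 0 i)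
        (f := fun s => Y 0 s * Y j' s) ((hY 0).mul (hY j'))
    _ = ∫ s, Y 0 (s ∘ Equiv.swap 1 j') * Y 1 (s ∘ Equiv.swap 1 j') ∂ν := by
        simp [Y, Equiv.swap_apply_of_ne_of_ne zero_ne_one hj'.symm]
    _ = ∫ s, Y 0 s * Y 1 s ∂ν := integral_comp_perm hν (isFinitaryPerm_swap 1 j')
        (f := fun s => Y 0 s * Y 1 s) ((hY 0).mul (hY 1))

variable [IsProbabilityMeasure ν]

lemma integral_sq_blockFreq_sub_le {A : Set S} (hA : MeasurableSet A) {n : ℕ} (hn : 0 < n) :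
    ∫ s, (blockFreq A (4 * n) s - blockFreq A n s) ^ 2 ∂ν ≤ 2 / n := by
  classical
  set Y : ℕ → (ℕ → S) → ℝ := fun i s => A.indicator (fun _ => (1 : ℝ)) (s i)
  have hYm : ∀ i, Measurable (Y i) :=
    fun i => (measurable_const.indicator hA).comp (measurable_pi_apply i)
  have hY : ∀ i s, Y i s ∈ unitInterval := fun i s => Set.indicator_one_mem_unitInterval A (s i)
  have hYY : ∀ i j, Integrable (fun s => Y i s * Y j s) ν := fun i j =>
    integrable_of_forall_mem_unitInterval ((hYm i).mul (hYm j))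
      fun s => unitInterval.mul_mem (hY i s) (hY j s)
  have hdiag : ∀ i, ∫ s, Y i s * Y i s ∂ν = ∫ s, Y 0 s ∂ν := fun i => by
    rw [← integral_indicator_apply_eq hν hA i]
    congr 1 with s
    by_cases h : s i ∈ A <;> simp [Y, h]
  have hblock : ∀ n, blockFreq A n
      = fun s => (∑ j ∈ Finset.Ico n (2 * n), Y j s) / #(Finset.Ico n (2 * n)) := fun n => by
    ext s
    simp [blockFreq, Nat.card_Ico, Y, two_mul]
  have hdisj : Disjoint (Finset.Ico (4 * n) (2 * (4 * n))) (Finset.Ico n (2 * n)) := by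
    simp only [Finset.disjoint_left, Finset.mem_Ico]
    omega
  rw [hblock, hblock, integral_sq_avg_sub_avg_of_moments hYY hdiag
    (fun i j hij => integral_indicator_mul_indicator_apply_eq hν hA hij)
    (Finset.nonempty_Ico.2 (by omega)) (Finset.nonempty_Ico.2 (by omega)) hdisj]
  have hb : ∫ s, Y 0 s ∂ν ≤ 1 := by
    calc ∫ s, Y 0 s ∂ν ≤ ∫ _, (1 : ℝ) ∂ν :=
          integral_mono (integrable_of_forall_mem_unitInterval (hYm 0) (hY 0))
            (integrable_const 1) fun s => (hY 0 s).2
      _ = 1 := by simp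
  have ha : 0 ≤ ∫ s, Y 0 s * Y 1 s ∂ν :=
    integral_nonneg fun s => (unitInterval.mul_mem (hY 0 s) (hY 1 s)).1
  simp only [Nat.card_Ico, two_mul, Nat.add_sub_cancel, Nat.cast_mul, Nat.cast_ofNat]
  have hn' : (0 : ℝ) < n := by exact_mod_cast hn
  calc _ ≤ 1 * (1 / (4 * n) + 1 / n : ℝ) := by gcongr; linarith
    _ ≤ 2 / n := by field_simp; norm_num

lemma integral_abs_blockFreq_sub_le {A : Set S} (hA : MeasurableSet A) (k : ℕ) :
    ∫ s, |blockFreq A (4 ^ (k + 1)) s - blockFreq A (4 ^ k) s| ∂ν ≤ 2 * (1 / 2) ^ k := by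
  have hD : MemLp (fun s => blockFreq A (4 ^ (k + 1)) s - blockFreq A (4 ^ k) s) 2 ν := by
    refine .of_bound ((measurable_blockFreq hA _).sub
      (measurable_blockFreq hA _)).aestronglyMeasurable 1 (.of_forall fun s => ?_)
    have h₁ := blockFreq_mem_unitInterval A (4 ^ (k + 1)) s
    have h₂ := blockFreq_mem_unitInterval A (4 ^ k) s
    rw [Real.norm_eq_abs, abs_le]
    constructor <;> linarith [h₁.1, h₁.2, h₂.1, h₂.2]
  have hsq := integral_sq_blockFreq_sub_le hν hA (n := 4 ^ k) (by positivity)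
  rw [← pow_succ'] at hsq
  refine (pow_le_pow_iff_left₀ (integral_nonneg fun _ => abs_nonneg _) (by positivity)
    two_ne_zero).1 ?_
  calc _ ≤ _ := sq_integral_abs_le_integral_sq hD
    _ ≤ _ := hsq
    _ ≤ (2 * (1 / 2) ^ k) ^ 2 := by
      rw [mul_pow, ← pow_mul, mul_comm k, pow_mul]
      push_cast
      norm_num
      rw [div_le_iff₀ (by positivity), mul_assoc, ← mul_pow]
      norm_num

lemma ae_tendsto_limFreq {A : Set S} (hA : MeasurableSet A) :
    ∀ᵐ s ∂ν, Tendsto (fun k => blockFreq A (4 ^ k) s) atTop (𝓝 (limFreq A s)) :=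
  ae_tendsto_limsup_of_summable_integral_abs_sub
    (fun _ => integrable_of_forall_mem_unitInterval (measurable_blockFreq hA _)
      (blockFreq_mem_unitInterval A _))
    ((summable_geometric_two.mul_left 2).of_nonneg_of_le
      (fun _ => integral_nonneg fun _ => abs_nonneg _) (integral_abs_blockFreq_sub_le hν hA))

lemma integral_indicator_mul_eq_integral_limFreq_mul {B : Set S} (hB : MeasurableSet B) {m : ℕ}
    {F : (ℕ → S) → ℝ} (hF : Measurable F) {C : ℝ} (hFC : ∀ s, |F s| ≤ C)
    (hFswap : ∀ j ≥ m, ∀ s, F (s ∘ Equiv.swap m j) = F s) :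
    ∫ s, B.indicator (fun _ => (1 : ℝ)) (s m) * F s ∂ν = ∫ s, limFreq B s * F s ∂ν := by
  set Y : ℕ → (ℕ → S) → ℝ := fun k s => B.indicator (fun _ => (1 : ℝ)) (s k)
  have hYm : ∀ k, Measurable (Y k) :=
    fun k => (measurable_const.indicator hB).comp (measurable_pi_apply k)
  have hYF : ∀ k, Integrable (fun s => Y k s * F s) ν := fun k =>
    .of_bound ((hYm k).mul hF).aestronglyMeasurable C (.of_forall fun s =>
      abs_mul_le_of_mem_unitInterval (Set.indicator_one_mem_unitInterval B (s k)) (hFC s))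
  have hshift : ∀ j ≥ m, ∫ s, Y j s * F s ∂ν = ∫ s, Y m s * F s ∂ν := fun j hj => by
    rw [← integral_comp_perm hν (isFinitaryPerm_swap m j) (f := fun s => Y m s * F s)
      ((hYm m).mul hF)]
    simp [Y, hFswap j hj]
  have hblock : ∀ k, m ≤ 4 ^ k →
      ∫ s, blockFreq B (4 ^ k) s * F s ∂ν = ∫ s, Y m s * F s ∂ν := fun k hk => by
    have hsum : ∀ s, blockFreq B (4 ^ k) s * F s
        = (∑ j ∈ Finset.Ico (4 ^ k) (2 * 4 ^ k), Y j s * F s) / (4 ^ k : ℕ) := fun s => by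
      rw [blockFreq, div_mul_eq_mul_div, Finset.sum_mul]
    simp_rw [hsum]
    rw [integral_div, integral_finsetSum _ fun j _ => hYF j,
      Finset.sum_congr rfl fun j hj => hshift j (hk.trans (Finset.mem_Ico.1 hj).1),
      Finset.sum_const, Nat.card_Ico, two_mul, Nat.add_sub_cancel, nsmul_eq_mul,
      mul_div_cancel_left₀ _ (by positivity)]
  have hlim : Tendsto (fun k => ∫ s, blockFreq B (4 ^ k) s * F s ∂ν) atTop
      (𝓝 (∫ s, limFreq B s * F s ∂ν)) := by
    refine tendsto_integral_of_dominated_convergence (fun _ => C)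
      (fun k => ((measurable_blockFreq hB _).mul hF).aestronglyMeasurable) (integrable_const C)
      (fun _ => .of_forall fun s =>
        abs_mul_le_of_mem_unitInterval (blockFreq_mem_unitInterval B _ s) (hFC s)) ?_
    filter_upwards [ae_tendsto_limFreq hν hB] with s hs
    exact hs.mul_const _
  refine tendsto_nhds_unique (tendsto_const_nhds.congr' ?_) hlim
  filter_upwards [eventually_ge_atTop m] with k hk
  exact (hblock k (hk.trans (Nat.lt_pow_self (by norm_num)).le)).symm

theorem integral_prod_indicator_mul_eq_integral_prod_limFreq_mul (m : ℕ) {A : Fin m → Set S}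
    (hA : ∀ i, MeasurableSet (A i)) {W : (ℕ → S) → ℝ} (hW : Measurable W) {C : ℝ}
    (hWC : ∀ s, |W s| ≤ C) (hWinv : ∀ π, IsFinitaryPerm π → ∀ s, W (s ∘ π) = W s) :
    ∫ s, (∏ i, (A i).indicator (fun _ => (1 : ℝ)) (s i)) * W s ∂ν
      = ∫ s, (∏ i, limFreq (A i) s) * W s ∂ν := by
  induction m generalizing W with
  | zero => simp
  | succ m ih =>
    set Q : (ℕ → S) → ℝ := fun s => ∏ i : Fin m, (A i.castSucc).indicator (fun _ => (1 : ℝ)) (s i)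
    have hQ : Measurable Q := Finset.measurable_prod _ fun i _ =>
      (measurable_const.indicator (hA _)).comp (measurable_pi_apply _)
    have hQmem : ∀ s, Q s ∈ unitInterval := fun s =>
      unitInterval.prod_mem fun i _ => Set.indicator_one_mem_unitInterval _ _
    have hQswap : ∀ j ≥ m, ∀ s, Q (s ∘ Equiv.swap m j) = Q s := fun j hj s =>
      Finset.prod_congr rfl fun i _ => by
        rw [Function.comp_apply, Equiv.swap_apply_of_ne_of_ne (by omega) (by omega)]
    have hlimW : ∀ s, |limFreq (A (Fin.last m)) s * W s| ≤ C := fun s =>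
      abs_mul_le_of_mem_unitInterval (limFreq_mem_unitInterval _ s) (hWC s)
    calc ∫ s, (∏ i, (A i).indicator (fun _ => (1 : ℝ)) (s i)) * W s ∂ν
        = ∫ s, (A (Fin.last m)).indicator (fun _ => (1 : ℝ)) (s m) * (Q s * W s) ∂ν := by
          simp only [Fin.prod_univ_castSucc, Fin.val_castSucc, Fin.val_last, Q]
          congr 1 with s
          ring
      _ = ∫ s, limFreq (A (Fin.last m)) s * (Q s * W s) ∂ν :=
          integral_indicator_mul_eq_integral_limFreq_mul hν (hA _) (hQ.mul hW)
            (fun s => abs_mul_le_of_mem_unitInterval (hQmem s) (hWC s))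
            fun j hj s => by rw [hQswap j hj, hWinv _ (isFinitaryPerm_swap m j)]
      _ = ∫ s, Q s * (limFreq (A (Fin.last m)) s * W s) ∂ν := by
          congr 1 with s
          ring
      _ = ∫ s, (∏ i : Fin m, limFreq (A i.castSucc) s) * (limFreq (A (Fin.last m)) s * W s) ∂ν :=
          ih (fun i => hA _) ((measurable_limFreq (hA _)).mul hW) hlimW
            fun π hπ s => by rw [limFreq_comp_perm _ hπ, hWinv π hπ]
      _ = ∫ s, (∏ i, limFreq (A i) s) * W s ∂ν := by
          simp only [Fin.prod_univ_castSucc]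
          congr 1 with s
          ring

end InvariantMeasure

section Sequence

variable {Ω S : Type*} {mΩ : MeasurableSpace Ω} [MeasurableSpace S] {P : Measure Ω}
  {X : ℕ → Ω → S}

lemma exchangeableSigma_le (hX : ∀ n, Measurable (X n)) : exchangeableSigma X ≤ mΩ := by
  rw [exchangeableSigma_eq_comap]
  exact (MeasurableSpace.comap_mono permInvariantSigma_le).trans
    (measurable_pi_lambda _ hX).comap_le

lemma measure_inter_iInter_eq_ofReal_setIntegral [IsFiniteMeasure P] (hX : ∀ n, Measurable (X n))
    {m : ℕ} {A : Fin m → Set S} (hA : ∀ i, MeasurableSet (A i)) (G : Set Ω) :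
    P (G ∩ ⋂ i, {ω | X i ω ∈ A i})
      = ENNReal.ofReal (∫ ω in G, ∏ i, (A i).indicator (fun _ => (1 : ℝ)) (X i ω) ∂P) := by
  have hprod : ∀ ω, ∏ i, (A i).indicator (fun _ => (1 : ℝ)) (X i ω)
      = (⋂ i, {ω | X i ω ∈ A i}).indicator (fun _ => 1) ω := fun ω => by
    by_cases h : ω ∈ ⋂ i, {ω | X i ω ∈ A i}
    · rw [Set.indicator_of_mem h]
      exact Finset.prod_eq_one fun i _ =>
        Set.indicator_of_mem (show X i ω ∈ A i from Set.mem_iInter.1 h i) _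
    · rw [Set.indicator_of_notMem h]
      obtain ⟨i, hi⟩ := not_forall.1 (Set.mem_iInter.not.1 h)
      exact Finset.prod_eq_zero (Finset.mem_univ i)
        (Set.indicator_of_notMem (show X i ω ∉ A i from hi) _)
  have hT : MeasurableSet (⋂ i, {ω | X i ω ∈ A i}) := .iInter fun i => hX i (hA i)
  simp_rw [hprod]
  rw [setIntegral_indicator hT, setIntegral_const, smul_eq_mul, mul_one, ofReal_measureReal]

variable [IsProbabilityMeasure P]

lemma Exchangeable.setIntegral_prod_indicator_eq (hX : ∀ n, Measurable (X n))
    (hexch : Exchangeable P X) {G : Set Ω} (hG : MeasurableSet[exchangeableSigma X] G) {m : ℕ}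
    {A : Fin m → Set S} (hA : ∀ i, MeasurableSet (A i)) :
    ∫ ω in G, ∏ i, (A i).indicator (fun _ => (1 : ℝ)) (X i ω) ∂P
      = ∫ ω in G, ∏ i, limFreq (A i) (fun j => X j ω) ∂P := by
  have hΦ : Measurable fun ω i => X i ω := measurable_pi_lambda _ hX
  have := Measure.isProbabilityMeasure_map (μ := P) hΦ.aemeasurable
  rw [exchangeableSigma_eq_comap, MeasurableSpace.measurableSet_comap] at hG
  obtain ⟨B, hB, rfl⟩ := hG
  obtain ⟨hBm, hBinv⟩ := measurableSet_permInvariantSigma_iff.1 hB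
  have hind : ∀ f : (ℕ → S) → ℝ, Measurable f →
      ∫ ω in (fun ω i => X i ω) ⁻¹' B, f (fun i => X i ω) ∂P
        = ∫ s, f s * B.indicator (fun _ => 1) s ∂P.map (fun ω i => X i ω) := fun f hf => by
    rw [← setIntegral_map hBm hf.aestronglyMeasurable hΦ.aemeasurable, ← integral_indicator hBm]
    congr 1 with s
    by_cases h : s ∈ B <;> simp [h]
  rw [hind (fun s => ∏ i, (A i).indicator (fun _ => (1 : ℝ)) (s i)) (Finset.measurable_prod _
      fun i _ => (measurable_const.indicator (hA i)).comp (measurable_pi_apply _)),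
    hind (fun s => ∏ i, limFreq (A i) s)
      (Finset.measurable_prod _ fun i _ => measurable_limFreq (hA i))]
  exact integral_prod_indicator_mul_eq_integral_prod_limFreq_mul
    (fun π hπ => hexch.map_comp_perm hX hπ) m hA (measurable_const.indicator hBm)
    (fun s => (abs_of_nonneg (Set.indicator_one_mem_unitInterval B s).1).trans_le
      (Set.indicator_one_mem_unitInterval B s).2)
    fun π hπ s => by
      have h : s ∘ π ∈ B ↔ s ∈ B := Set.ext_iff.1 (hBinv π hπ) s
      by_cases hs : s ∈ B <;> simp [hs, h]

lemma Exchangeable.limFreq_ae_eq_condExp (hX : ∀ n, Measurable (X n)) (hexch : Exchangeable P X)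
    {B : Set S} (hB : MeasurableSet B) :
    (fun ω => limFreq B fun i => X i ω)
      =ᵐ[P] P[fun ω => B.indicator (fun _ => (1 : ℝ)) (X 0 ω) | exchangeableSigma X] := by
  have hΦ : Measurable fun ω i => X i ω := measurable_pi_lambda _ hX
  refine ae_eq_condExp_of_forall_setIntegral_eq (exchangeableSigma_le hX)
    (integrable_of_forall_mem_unitInterval ((measurable_const.indicator hB).comp (hX 0))
      fun ω => Set.indicator_one_mem_unitInterval B _)
    (fun G _ _ => (integrable_of_forall_mem_unitInterval ((measurable_limFreq hB).comp hΦ)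
      fun ω => limFreq_mem_unitInterval B _).integrableOn)
    (fun G hG _ => ?_) ?_
  · simpa using (hexch.setIntegral_prod_indicator_eq hX hG (A := fun _ : Fin 1 => B)
      fun _ => hB).symm
  · have h : Measurable[exchangeableSigma X] fun ω => limFreq B fun i => X i ω := by
      rw [exchangeableSigma_eq_comap]
      exact (measurable_permInvariantSigma (measurable_limFreq hB)
        fun π hπ s => limFreq_comp_perm B hπ s).comp (comap_measurable _)
    exact h.aestronglyMeasurable

end Sequence

/-- If `X 0` admits a regular conditional distribution `κ` given the exchangeable
σ-algebra, then the sequence is conditionally iid given the exchangeable σ-algebra,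
and indeed `κ^∞` is a regular conditional distribution of the whole sequence. -/
theorem stmt3 {Ω S : Type*} [mΩ : MeasurableSpace Ω] [MeasurableSpace S]
    (P : Measure Ω) [IsProbabilityMeasure P] (X : ℕ → Ω → S) (hX : ∀ n, Measurable (X n))
    (hexch : Exchangeable P X)
    (κ : @Kernel Ω S (exchangeableSigma X) _)
    (hκ : @IsMarkovKernel Ω S (exchangeableSigma X) _ κ)
    (hrcd : IsRCD P (X 0) (exchangeableSigma X) κ) :
    CondIIDKernel P X (exchangeableSigma X) κ ∧ CondIID P X (exchangeableSigma X) := by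
  have hcond : CondIIDKernel P X (exchangeableSigma X) κ := fun m A hA G hG => by
    have hκX : ∀ᵐ ω ∂P, ∀ i, (κ ω (A i)).toReal = limFreq (A i) fun j => X j ω :=
      ae_all_iff.2 fun i => (hrcd _ (hA i)).trans (hexch.limFreq_ae_eq_condExp hX (hA i)).symm
    rw [measure_inter_iInter_eq_ofReal_setIntegral hX hA G,
      hexch.setIntegral_prod_indicator_eq hX hG hA,
      setLIntegral_prod_kernel_eq_ofReal (exchangeableSigma_le hX) κ hA G]
    refine congrArg ENNReal.ofReal (integral_congr_ae (ae_restrict_of_ae ?_))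
    filter_upwards [hκX] with ω hω
    exact Finset.prod_congr rfl fun i _ => (hω i).symm
  exact ⟨hcond, κ, hκ, hcond⟩
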